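/- Every tropical hemispace H ⊆ ℝmaxⁿ is a tropical polyhedron with mixed constraints, i.e., it is the solution set of finitely many mixed tropical affine inequalities. -/

import Mathlib

attribute [local instance] Classical.propDecidable

/-- The germ semiring `𝔾 = ℝmax ∪ {+∞} ∪ ℝ⁻`: `negInf` is `-∞`, `fin a` is the
real number `a` (an element of `ℝmax`), `germ a` is the germ `a̲ ∈ ℝ⁻`, and
`posInf` is `+∞`. -/
inductive TGerm where
  | negInf : TGerm
  | fin : ℝ → TGerm
  | germ : ℝ → TGerm
  | posInf : TGerm

namespace TGerm

/-- The modulus `|x| ∈ ℝmax ∪ {+∞} = EReal` of an element of `𝔾`. -/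
noncomputable def modulus : TGerm → EReal
  | negInf => ⊥
  | fin a => (a : EReal)
  | germ a => (a : EReal)
  | posInf => ⊤

/-- Whether `x` belongs to the copy `ℝ⁻` of perturbed reals. -/
def isPert : TGerm → Bool
  | germ _ => true
  | _ => false

/-- The total order `≤𝔾` on `𝔾`: `x ≤𝔾 y` iff `|x| < |y|` when
`x ∈ ℝmax ∪ {+∞}` and `y ∈ ℝ⁻`, and `|x| ≤ |y|` otherwise. -/
def gle (x y : TGerm) : Prop :=
  if isPert x = false ∧ isPert y = true then modulus x < modulus y
  else modulus x ≤ modulus y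

/-- The valuation `x(ε) ∈ ℝmax ∪ {+∞} = EReal` of `x ∈ 𝔾` at `ε`. -/
noncomputable def val : TGerm → ℝ → EReal
  | negInf, _ => ⊥
  | fin a, _ => (a : EReal)
  | germ a, ε => ((a - ε : ℝ) : EReal)
  | posInf, _ => ⊤

/-- The addition `⊕` of `𝔾`: the maximum with respect to `≤𝔾`. -/
noncomputable def add (x y : TGerm) : TGerm := if gle x y then y else x

/-- The minimum with respect to `≤𝔾`. -/
noncomputable def gmin (x y : TGerm) : TGerm := if gle x y then x else y

/-- The tropical sum `⊕ᵢ f i` of a finite family in `𝔾`. -/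
noncomputable def gsum {n : ℕ} (f : Fin n → TGerm) : TGerm :=
  (List.ofFn f).foldr add negInf

/-- The minimum (w.r.t. `≤𝔾`) of a finite family in `𝔾`. -/
noncomputable def ginf {n : ℕ} (f : Fin n → TGerm) : TGerm :=
  (List.ofFn f).foldr gmin posInf

/-- The multiplication `⊗` of `𝔾`. -/
def mul : TGerm → TGerm → TGerm
  | negInf, _ => negInf
  | _, negInf => negInf
  | posInf, _ => posInf
  | _, posInf => posInf
  | fin a, fin b => fin (a + b)
  | fin a, germ b => germ (a + b)
  | germ a, fin b => germ (a + b)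
  | germ a, germ b => germ (a + b)

end TGerm

/-- The embedding of `ℝmax = ℝ ∪ {-∞}` into the germ semiring `𝔾`. -/
def toGerm (x : WithBot ℝ) : TGerm := WithBot.recBotCoe TGerm.negInf TGerm.fin x

/-- The embedding of `ℝmax = ℝ ∪ {-∞}` into `ℝmax ∪ {+∞} = EReal`. -/
noncomputable def rmaxToEReal (x : WithBot ℝ) : EReal :=
  WithBot.recBotCoe ⊥ (fun a : ℝ => (a : EReal)) x

/-- A subset of `ℝmaxⁿ` is tropically convex. -/
def TropConvex {n : ℕ} (C : Set (Fin n → WithBot ℝ)) : Prop :=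
  ∀ u ∈ C, ∀ v ∈ C, ∀ lam mu : WithBot ℝ, max lam mu = 0 →
    (fun i => max (lam + u i) (mu + v i)) ∈ C

/-- A subset of `ℝmaxⁿ` is a tropical polyhedron with mixed constraints: it is
the solution set of finitely many mixed tropical affine inequalities
`a₀ ⊕ a₁x₁ ⊕ ⋯ ⊕ aₙxₙ ≤𝔾 b₀ ⊕ b₁x₁ ⊕ ⋯ ⊕ bₙxₙ` with `aᵢ ∈ ℝmax`, `bᵢ ∈ 𝔾`. -/
def IsMixedPoly {n : ℕ} (P : Set (Fin n → WithBot ℝ)) : Prop :=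
  ∃ (p : ℕ) (a₀ : Fin p → WithBot ℝ) (a : Fin p → Fin n → WithBot ℝ)
    (b₀ : Fin p → TGerm) (b : Fin p → Fin n → TGerm),
    P = { x | ∀ k,
      (TGerm.add (toGerm (a₀ k))
          (TGerm.gsum fun i => (toGerm (a k i)).mul (toGerm (x i)))).gle
        (TGerm.add (b₀ k) (TGerm.gsum fun i => (b k i).mul (toGerm (x i)))) }

/-!
The complement of a hemispace `H` is covered by the boxes `Iic x` and, for each coordinate `t`,
the sectors `{w | y t ≤ w t, w j - w t ≤ y j - y t}` that it contains: a point of `Hᶜ` outside all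
of them would be a tropical combination of points of `H`. Convexity of `Hᶜ` makes each of these
`n + 1` families directed, so each union is described coordinatewise by cuts of `ℝ`. A closed
cut `(-∞, a]` is tested by `a` and an open cut `(-∞, a)` by the germ `a̲`, so each union is the
set where one mixed inequality fails, and `H` is the intersection of the `n + 1` inequalities.
-/

namespace TGerm

/-- `≤𝔾` is the lexicographic order on the modulus, followed by `ℝ⁻ < ℝmax ∪ {+∞}`. -/
noncomputable def key (x : TGerm) : EReal ×ₗ Bool := toLex (modulus x, !isPert x)

theorem gle_iff_key_le {x y : TGerm} : gle x y ↔ key x ≤ key y := by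
  simp only [gle, key, Prod.Lex.toLex_le_toLex]
  cases isPert x <;> cases isPert y <;> simp [le_iff_lt_or_eq]

theorem key_add (x y : TGerm) : key (add x y) = max (key x) (key y) := by
  unfold add
  split_ifs with h
  · exact (max_eq_right (gle_iff_key_le.1 h)).symm
  · exact (max_eq_left (le_of_not_ge (mt gle_iff_key_le.2 h))).symm

theorem gle_add_iff {x y z : TGerm} : gle z (add x y) ↔ gle z x ∨ gle z y := by
  simp only [gle_iff_key_le, key_add, le_max_iff]

theorem gsum_succ {n : ℕ} (f : Fin (n + 1) → TGerm) :
    gsum f = add (f 0) (gsum fun i => f i.succ) := by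
  simp [gsum, List.ofFn_succ]

theorem gle_gsum_iff {n : ℕ} {z : TGerm} {f : Fin n → TGerm} :
    gle z (gsum f) ↔ gle z negInf ∨ ∃ i, gle z (f i) := by
  induction n with
  | zero => simp [gsum]
  | succ n ih => simp only [gsum_succ, gle_add_iff, ih, Fin.exists_fin_succ]; tauto

theorem gle_negInf_left (z : TGerm) : gle negInf z := by cases z <;> simp [gle, isPert, modulus]

theorem gle_fin_fin {r a : ℝ} : gle (fin r) (fin a) ↔ r ≤ a := by simp [gle, isPert, modulus]

theorem gle_fin_germ {r a : ℝ} : gle (fin r) (germ a) ↔ r < a := by simp [gle, isPert, modulus]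

theorem gle_fin_posInf {r : ℝ} : gle (fin r) posInf := by simp [gle, isPert, modulus]

theorem not_gle_fin_negInf {r : ℝ} : ¬ gle (fin r) negInf := by simp [gle, isPert, modulus]

@[simp] theorem mul_negInf (γ : TGerm) : γ.mul negInf = negInf := by cases γ <;> rfl

theorem gle_fin_mul_fin {r a : ℝ} {γ : TGerm} :
    gle (fin r) (γ.mul (fin a)) ↔ gle (fin (r - a)) γ := by
  cases γ <;>
    simp [mul, gle_fin_fin, gle_fin_germ, gle_fin_posInf, not_gle_fin_negInf, sub_lt_iff_lt_add]

end TGerm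

open TGerm

theorem toGerm_le_iff {a b : WithBot ℝ} : gle (toGerm a) (toGerm b) ↔ a ≤ b := by
  cases a using WithBot.recBotCoe <;> cases b using WithBot.recBotCoe <;>
    simp [toGerm, gle, isPert, modulus]

theorem toGerm_max (a b : WithBot ℝ) : toGerm (max a b) = add (toGerm a) (toGerm b) := by
  unfold add
  split_ifs with h
  · rw [max_eq_right (toGerm_le_iff.1 h)]
  · rw [max_eq_left (le_of_not_ge (mt toGerm_le_iff.2 h))]

theorem toGerm_add (a b : WithBot ℝ) : toGerm (a + b) = (toGerm a).mul (toGerm b) := by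
  cases a using WithBot.recBotCoe <;> cases b using WithBot.recBotCoe <;> rfl

@[simp] theorem toGerm_bot : toGerm ⊥ = negInf := rfl

@[simp] theorem toGerm_coe (a : ℝ) : toGerm a = fin a := rfl

theorem toGerm_finsetSup {n : ℕ} (f : Fin n → WithBot ℝ) :
    toGerm (Finset.univ.sup f) = gsum fun i => toGerm (f i) := by
  induction n with
  | zero => rfl
  | succ n ih =>
    rw [gsum_succ, ← ih, ← toGerm_max, Fin.univ_succ, Finset.sup_cons, Finset.sup_map]
    rfl

theorem add_toGerm_gsum {n : ℕ} (a₀ : WithBot ℝ) (a x : Fin n → WithBot ℝ) :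
    add (toGerm a₀) (gsum fun i => (toGerm (a i)).mul (toGerm (x i))) =
      toGerm (a₀ ⊔ Finset.univ.sup fun i => a i + x i) := by
  simp only [← toGerm_add, ← toGerm_finsetSup, ← toGerm_max]

theorem gle_fin_mul_toGerm {r : ℝ} {γ : TGerm} {x : WithBot ℝ} :
    gle (fin r) (γ.mul (toGerm x)) ↔ ∃ a : ℝ, x = a ∧ gle (fin (r - a)) γ := by
  cases x using WithBot.recBotCoe <;> simp [not_gle_fin_negInf, gle_fin_mul_fin]

theorem gle_toGerm_add_gsum_iff {n : ℕ} {ℓ : WithBot ℝ} {γ₀ : TGerm} {γ : Fin n → TGerm}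
    {x : Fin n → WithBot ℝ} :
    gle (toGerm ℓ) (add γ₀ (gsum fun j => (γ j).mul (toGerm (x j)))) ↔
      ∀ r : ℝ, ℓ = r → gle (fin r) γ₀ ∨ ∃ j, ∃ a : ℝ, x j = a ∧ gle (fin (r - a)) (γ j) := by
  cases ℓ using WithBot.recBotCoe with
  | bot => simp [gle_negInf_left]
  | coe r => simp [gle_add_iff, gle_gsum_iff, not_gle_fin_negInf, gle_fin_mul_toGerm]

theorem exists_gle_fin_iff_notMem {U : Set ℝ} (hU : IsUpperSet U) :
    ∃ γ : TGerm, ∀ r : ℝ, gle (fin r) γ ↔ r ∉ U := by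
  rcases U.eq_empty_or_nonempty with rfl | hne
  · exact ⟨posInf, fun r => by simp [gle_fin_posInf]⟩
  by_cases hbdd : BddBelow U
  · by_cases hc : sInf U ∈ U
    · refine ⟨germ (sInf U), fun r => ?_⟩
      rw [gle_fin_germ]
      exact ⟨fun hr hrU => (csInf_le hbdd hrU).not_gt hr,
        fun hr => lt_of_not_ge fun hcr => hr (hU hcr hc)⟩
    · refine ⟨fin (sInf U), fun r => ?_⟩
      rw [gle_fin_fin]
      refine ⟨fun hrc hrU => hc (le_antisymm hrc (csInf_le hbdd hrU) ▸ hrU),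
        fun hr => le_of_not_gt fun hcr => ?_⟩
      obtain ⟨u, hu, hur⟩ := exists_lt_of_csInf_lt hne hcr
      exact hr (hU hur.le hu)
  · refine ⟨negInf, fun r => ?_⟩
    simp only [not_gle_fin_negInf, false_iff, not_not]
    obtain ⟨u, hu, hur⟩ := not_bddBelow_iff.1 hbdd r
    exact hU hur.le hu

def IsMixedHalfspace {n : ℕ} (S : Set (Fin n → WithBot ℝ)) : Prop :=
  ∃ (a₀ : WithBot ℝ) (a : Fin n → WithBot ℝ) (b₀ : TGerm) (b : Fin n → TGerm),
    S = { x | (TGerm.add (toGerm a₀)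
          (TGerm.gsum fun i => (toGerm (a i)).mul (toGerm (x i)))).gle
        (TGerm.add b₀ (TGerm.gsum fun i => (b i).mul (toGerm (x i)))) }

theorem isMixedPoly_iInter {n : ℕ} {ι : Type*} [Finite ι] {S : ι → Set (Fin n → WithBot ℝ)}
    (h : ∀ k, IsMixedHalfspace (S k)) : IsMixedPoly (⋂ k, S k) := by
  choose a₀ a b₀ b hS using h
  obtain ⟨p, ⟨e⟩⟩ := Finite.exists_equiv_fin ι
  refine ⟨p, a₀ ∘ e.symm, a ∘ e.symm, b₀ ∘ e.symm, b ∘ e.symm, ?_⟩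
  ext x
  simp only [Set.mem_iInter, hS, Set.mem_ofPred_eq, Function.comp_apply]
  exact e.symm.forall_congr_right.symm

section Translation

variable {ι : Type*}

theorem vadd_le_vadd_of_le (a : WithBot ℝ) {u v : ι → WithBot ℝ} (h : u ≤ v) : a +ᵥ u ≤ a +ᵥ v :=
  fun i => add_le_add_right (h i) a

theorem vadd_sup_distrib (a : WithBot ℝ) (u v : ι → WithBot ℝ) :
    a +ᵥ (u ⊔ v) = (a +ᵥ u) ⊔ (a +ᵥ v) :=
  funext fun i => add_max a (u i) (v i)

theorem coe_vadd_coe_vadd (a b : ℝ) (u : ι → WithBot ℝ) :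
    (a : WithBot ℝ) +ᵥ ((b : WithBot ℝ) +ᵥ u) = ((a + b : ℝ) : WithBot ℝ) +ᵥ u := by
  rw [vadd_vadd, WithBot.coe_add]

end Translation

namespace TropConvex

variable {n : ℕ} {C : Set (Fin n → WithBot ℝ)} {u v : Fin n → WithBot ℝ}

theorem vadd_sup_vadd_mem (hC : TropConvex C) (hu : u ∈ C) (hv : v ∈ C) {lam mu : WithBot ℝ}
    (h : max lam mu = 0) : (lam +ᵥ u) ⊔ (mu +ᵥ v) ∈ C :=
  hC u hu v hv lam mu h

theorem sup_vadd_mem (hC : TropConvex C) (hu : u ∈ C) (hv : v ∈ C) {lam : WithBot ℝ}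
    (hlam : lam ≤ 0) : u ⊔ (lam +ᵥ v) ∈ C := by
  simpa using hC.vadd_sup_vadd_mem hu hv (max_eq_left hlam)

theorem sup_mem (hC : TropConvex C) (hu : u ∈ C) (hv : v ∈ C) : u ⊔ v ∈ C := by
  simpa using hC.sup_vadd_mem hu hv le_rfl

theorem sup_finsetSup_vadd_mem (hC : TropConvex C) (hu : u ∈ C) {ι : Type*} (s : Finset ι)
    {w : ι → Fin n → WithBot ℝ} {lam : ι → WithBot ℝ} (hw : ∀ i ∈ s, w i ∈ C)
    (hlam : ∀ i ∈ s, lam i ≤ 0) : u ⊔ s.sup (fun i => lam i +ᵥ w i) ∈ C := by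
  classical
  induction s using Finset.induction_on with
  | empty => simpa using hu
  | insert a s _ ih =>
    rw [Finset.sup_insert, sup_comm (lam a +ᵥ w a), ← sup_assoc]
    exact hC.sup_vadd_mem (ih (fun i hi => hw i (Finset.mem_insert_of_mem hi))
      (fun i hi => hlam i (Finset.mem_insert_of_mem hi)))
        (hw a (Finset.mem_insert_self a s)) (hlam a (Finset.mem_insert_self a s))

end TropConvex

theorem coe_add_le_add_coe_iff {a r : ℝ} {u v : WithBot ℝ} :
    (a : WithBot ℝ) + u ≤ v + r ↔ u ≤ ((r - a : ℝ) : WithBot ℝ) + v := by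
  cases u using WithBot.recBotCoe with
  | bot => simp
  | coe u =>
    cases v using WithBot.recBotCoe with
    | bot => simp [← WithBot.coe_add]
    | coe v =>
      simp only [← WithBot.coe_add, WithBot.coe_le_coe]
      constructor <;> intro h <;> linarith

theorem exists_mem_forall_of_directedOn {ι β : Type*} [Fintype ι] {P : Set β}
    {Q : ι → β → Prop} (hne : P.Nonempty)
    (hdir : DirectedOn (fun p q => ∀ i, Q i p → Q i q) P) (h : ∀ i, ∃ p ∈ P, Q i p) :
    ∃ p ∈ P, ∀ i, Q i p := by
  obtain ⟨p, hp, hsub⟩ := hdir.exists_mem_subset_of_finset_subset_biUnion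
    (f := fun p => {i | Q i p}) hne (s := Finset.univ) (by intro i _; simpa using h i)
  exact ⟨p, hp, fun i => hsub (by simp)⟩

section Regions

variable {n : ℕ} {H : Set (Fin n → WithBot ℝ)} {t : Fin n} {w x y y' : Fin n → WithBot ℝ}

/-- For `y t ≠ ⊥` this is `{w | y t ≤ w t ∧ ∀ j, w j - w t ≤ y j - y t}`, see `mem_sector_iff`. -/
def sector (t : Fin n) (y : Fin n → WithBot ℝ) : Set (Fin n → WithBot ℝ) :=
  {w | ∃ ρ : ℝ, 0 ≤ ρ ∧ w ≤ (ρ : WithBot ℝ) +ᵥ y ∧ w t = ρ + y t}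

def boxRegion (H : Set (Fin n → WithBot ℝ)) : Set (Fin n → WithBot ℝ) := {x | Set.Iic x ⊆ Hᶜ}

def sectorRegion (H : Set (Fin n → WithBot ℝ)) (t : Fin n) : Set (Fin n → WithBot ℝ) :=
  {x | x t ≠ ⊥ ∧ sector t x ⊆ Hᶜ}

theorem mem_sector_self (t : Fin n) (x : Fin n → WithBot ℝ) : x ∈ sector t x :=
  ⟨0, le_rfl, by simp, by simp⟩

theorem sector_trans (hw : w ∈ sector t x) (hx : x ∈ sector t y) : w ∈ sector t y := by
  obtain ⟨ρ, hρ, hwx, hwt⟩ := hw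
  obtain ⟨σ, hσ, hxy, hxt⟩ := hx
  refine ⟨ρ + σ, add_nonneg hρ hσ, ?_, ?_⟩
  · rw [← coe_vadd_coe_vadd]
    exact hwx.trans (vadd_le_vadd_of_le _ hxy)
  · rw [hwt, hxt, WithBot.coe_add, add_assoc]

theorem apply_le_of_mem_sector (hx : x ∈ sector t y) : y t ≤ x t := by
  obtain ⟨ρ, hρ, -, hxt⟩ := hx
  rw [hxt]
  exact le_add_of_nonneg_left (WithBot.coe_nonneg.2 hρ)

theorem add_le_add_of_mem_sector (hx : x ∈ sector t y) {j : Fin n} {a b : WithBot ℝ}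
    (h : a + x t ≤ x j + b) : a + y t ≤ y j + b := by
  obtain ⟨ρ, -, hxy, hxt⟩ := hx
  refine (WithBot.add_le_add_iff_left (WithBot.coe_ne_bot (a := ρ))).1 ?_
  calc (ρ : WithBot ℝ) + (a + y t) = a + x t := by rw [hxt, add_left_comm]
    _ ≤ x j + b := h
    _ ≤ (ρ + y j) + b := add_le_add_left (hxy j) b
    _ = ρ + (y j + b) := add_assoc _ _ _

theorem mem_sector_iff (hy : y t ≠ ⊥) :
    x ∈ sector t y ↔ y t ≤ x t ∧ ∀ j, x j + y t ≤ y j + x t := by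
  refine ⟨fun hx => ⟨apply_le_of_mem_sector hx, fun j => ?_⟩, fun ⟨hyx, hx⟩ => ?_⟩
  · simpa using add_le_add_of_mem_sector hx (a := x j) (b := x t) (j := j) le_rfl
  · obtain ⟨b, hb⟩ := WithBot.ne_bot_iff_exists.1 hy
    obtain ⟨a, ha⟩ := WithBot.ne_bot_iff_exists.1 (ne_bot_of_le_ne_bot hy hyx)
    refine ⟨a - b, sub_nonneg.2 (WithBot.coe_le_coe.1 (hb ▸ ha ▸ hyx)), fun j => ?_, ?_⟩
    · rw [Pi.vadd_apply, vadd_eq_add, ← coe_add_le_add_coe_iff, add_comm, hb, ha]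
      exact hx j
    · rw [← ha, ← hb, ← WithBot.coe_add, sub_add_cancel]

theorem boxRegion_subset_compl : boxRegion H ⊆ Hᶜ := fun _ hx => hx Set.self_mem_Iic

theorem sectorRegion_subset_compl : sectorRegion H t ⊆ Hᶜ :=
  fun x hx => hx.2 (mem_sector_self t x)

theorem compl_subset_boxRegion_union_sectorRegion (h1 : TropConvex H) :
    Hᶜ ⊆ boxRegion H ∪ ⋃ t, sectorRegion H t := by
  intro z hz
  by_contra hcov
  simp only [Set.mem_union, Set.mem_iUnion, not_or, not_exists] at hcov
  obtain ⟨u₀, hu₀z, hu₀H⟩ : ∃ u₀ ≤ z, u₀ ∈ H := by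
    simpa [boxRegion, Set.not_subset] using hcov.1
  have hdom : ∀ t, ∃ lam ≤ (0 : WithBot ℝ), ∃ u ∈ H, lam +ᵥ u ≤ z ∧ lam + u t = z t := by
    intro t
    by_cases hzt : z t = ⊥
    · exact ⟨⊥, bot_le, u₀, hu₀H, fun j => by simp, by simp [hzt]⟩
    · obtain ⟨u, ⟨ρ, hρ, huz, hut⟩, huH⟩ : ∃ u ∈ sector t z, u ∈ H := by
        simpa [sectorRegion, hzt, Set.not_subset] using hcov.2 t
      refine ⟨((-ρ : ℝ) : WithBot ℝ), by simpa using hρ, u, huH, ?_, ?_⟩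
      · calc ((-ρ : ℝ) : WithBot ℝ) +ᵥ u ≤ ((-ρ : ℝ) : WithBot ℝ) +ᵥ ((ρ : WithBot ℝ) +ᵥ z) :=
              vadd_le_vadd_of_le _ huz
          _ = z := by simp [coe_vadd_coe_vadd]
      · rw [hut, ← add_assoc, ← WithBot.coe_add, neg_add_cancel, WithBot.coe_zero, zero_add]
  choose lam hlam u huH huz hut using hdom
  -- `z` is the join of `u₀` and of the translates `lam t +ᵥ u t`, which touch `z` at `t`.
  have hz_eq : z = u₀ ⊔ Finset.univ.sup (fun t => lam t +ᵥ u t) := by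
    refine le_antisymm (fun j => ?_) (sup_le hu₀z (Finset.sup_le fun t _ => huz t))
    calc z j = (lam j +ᵥ u j) j := (hut j).symm
      _ ≤ Finset.univ.sup (fun t => lam t +ᵥ u t) j :=
        Finset.le_sup (f := fun t => lam t +ᵥ u t) (Finset.mem_univ j) j
      _ ≤ _ := le_sup_right (a := u₀) j
  exact hz (hz_eq ▸ h1.sup_finsetSup_vadd_mem hu₀H _ (fun t _ => huH t) (fun t _ => hlam t))

theorem compl_eq_boxRegion_union_sectorRegion (h1 : TropConvex H) :
    Hᶜ = boxRegion H ∪ ⋃ t, sectorRegion H t :=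
  (compl_subset_boxRegion_union_sectorRegion h1).antisymm
    (Set.union_subset boxRegion_subset_compl
      (Set.iUnion_subset fun _ => sectorRegion_subset_compl))

theorem isLowerSet_boxRegion : IsLowerSet (boxRegion H) :=
  fun _ _ hyx hx => (Set.Iic_subset_Iic.2 hyx).trans hx

theorem sup_mem_boxRegion (h2 : TropConvex Hᶜ) (hx : x ∈ boxRegion H) (hy : y ∈ boxRegion H) :
    x ⊔ y ∈ boxRegion H := by
  intro w (hw : w ≤ x ⊔ y)
  rw [← inf_eq_left.2 hw, inf_sup_left]
  exact h2.sup_mem (hx (inf_le_right : w ⊓ x ≤ x)) (hy (inf_le_right : w ⊓ y ≤ y))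

theorem mem_boxRegion_iff (h2 : TropConvex Hᶜ) :
    x ∈ boxRegion H ↔
      (boxRegion H).Nonempty ∧ ∀ j (a : ℝ), x j = a → ∃ y ∈ boxRegion H, (a : WithBot ℝ) ≤ y j := by
  refine ⟨fun hx => ⟨⟨x, hx⟩, fun j a ha => ⟨x, hx, ha.ge⟩⟩, fun ⟨hne, h⟩ => ?_⟩
  have hdir : DirectedOn (fun y z => ∀ j, x j ≤ y j → x j ≤ z j) (boxRegion H) :=
    fun y hy y' hy' => ⟨y ⊔ y', sup_mem_boxRegion h2 hy hy',
      fun j hj => hj.trans (le_sup_left (a := y) j),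
      fun j hj => hj.trans (le_sup_right (b := y') j)⟩
  obtain ⟨y, hy, hxy⟩ := exists_mem_forall_of_directedOn hne hdir fun j => by
    cases hxj : x j using WithBot.recBotCoe with
    | bot => exact ⟨hne.some, hne.some_mem, bot_le⟩
    | coe a => exact h j a hxj
  exact isLowerSet_boxRegion hxy hy

theorem mem_sectorRegion_of_mem_sector (hy : y ∈ sectorRegion H t) (hx : x ∈ sector t y) :
    x ∈ sectorRegion H t :=
  ⟨ne_bot_of_le_ne_bot hy.1 (apply_le_of_mem_sector hx), fun _ hw => hy.2 (sector_trans hw hx)⟩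

theorem sector_sup_vadd_subset (h2 : TropConvex Hᶜ)
    (hy : sector t y ⊆ Hᶜ) (hy' : sector t y' ⊆ Hᶜ) {lam : ℝ} (ht : lam + y t = y' t) :
    sector t (y' ⊔ ((lam : WithBot ℝ) +ᵥ y)) ⊆ Hᶜ := by
  rintro w ⟨ρ, hρ, hw, hwt⟩
  have hzt : (y' ⊔ ((lam : WithBot ℝ) +ᵥ y)) t = y' t := by simp [ht]
  set σ := ρ + lam
  set ν := min 0 σ
  -- `w` is the join of its parts below `ρ +ᵥ y'` and below `σ +ᵥ y`; the first lies in the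
  -- sector of `y'`, the second in that of `y` once translated up by `-ν ≥ 0`.
  have hq : w ⊓ ((ρ : WithBot ℝ) +ᵥ y') ∈ sector t y' :=
    ⟨ρ, hρ, inf_le_right, by simp [hwt, hzt]⟩
  have hp : ((-ν : ℝ) : WithBot ℝ) +ᵥ (w ⊓ ((σ : WithBot ℝ) +ᵥ y)) ∈ sector t y := by
    refine ⟨-ν + σ, by linarith [min_le_right 0 σ], ?_, ?_⟩
    · rw [← coe_vadd_coe_vadd (-ν) σ]
      exact vadd_le_vadd_of_le _ inf_le_right
    · have hwt' : w t = σ + y t := by rw [hwt, hzt, ← ht, ← add_assoc, ← WithBot.coe_add]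
      simp [hwt', WithBot.coe_add, add_assoc]
  have hw_eq : w = ((0 : WithBot ℝ) +ᵥ (w ⊓ ((ρ : WithBot ℝ) +ᵥ y'))) ⊔
      ((ν : WithBot ℝ) +ᵥ (((-ν : ℝ) : WithBot ℝ) +ᵥ (w ⊓ ((σ : WithBot ℝ) +ᵥ y)))) := by
    rw [zero_vadd, coe_vadd_coe_vadd, add_neg_cancel, WithBot.coe_zero, zero_vadd,
      ← inf_sup_left, ← coe_vadd_coe_vadd, ← vadd_sup_distrib, inf_eq_left.2 hw]
  rw [hw_eq]
  exact h2.vadd_sup_vadd_mem (hy' hq) (hy hp)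
    (max_eq_left (WithBot.coe_le_coe.2 (min_le_left 0 σ)))

theorem exists_sectorRegion_of_le (h2 : TropConvex Hᶜ)
    (hy : y ∈ sectorRegion H t) (hy' : y' ∈ sectorRegion H t) (hle : y' t ≤ y t) :
    ∃ z ∈ sectorRegion H t, y ∈ sector t z ∧ y' ∈ sector t z := by
  obtain ⟨b, hb⟩ := WithBot.ne_bot_iff_exists.1 hy.1
  obtain ⟨b', hb'⟩ := WithBot.ne_bot_iff_exists.1 hy'.1
  have ht : ((b' - b : ℝ) : WithBot ℝ) + y t = y' t := by
    rw [← hb, ← hb', ← WithBot.coe_add, sub_add_cancel]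
  have hzt : (y' ⊔ (((b' - b : ℝ) : WithBot ℝ) +ᵥ y)) t = y' t := by simp [ht]
  refine ⟨y' ⊔ (((b' - b : ℝ) : WithBot ℝ) +ᵥ y),
    ⟨hzt ▸ hy'.1, sector_sup_vadd_subset h2 hy.2 hy'.2 ht⟩, ⟨b - b', ?_, ?_, ?_⟩,
    ⟨0, le_rfl, by simp, by simp [hzt]⟩⟩
  · exact sub_nonneg.2 (WithBot.coe_le_coe.1 (hb ▸ hb' ▸ hle))
  · calc y = ((b - b' : ℝ) : WithBot ℝ) +ᵥ (((b' - b : ℝ) : WithBot ℝ) +ᵥ y) := by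
          simp [coe_vadd_coe_vadd]
      _ ≤ _ := vadd_le_vadd_of_le _ le_sup_right
  · rw [hzt, ← hb, ← hb', ← WithBot.coe_add, sub_add_cancel]

theorem sectorRegion_directedOn (h2 : TropConvex Hᶜ) :
    DirectedOn (fun y z => y ∈ sector t z) (sectorRegion H t) := by
  intro y hy y' hy'
  rcases le_total (y' t) (y t) with hle | hle
  · exact exists_sectorRegion_of_le h2 hy hy' hle
  · obtain ⟨z, hz, hy'z, hyz⟩ := exists_sectorRegion_of_le h2 hy' hy hle
    exact ⟨z, hz, hyz, hy'z⟩

theorem mem_sectorRegion_iff (h2 : TropConvex Hᶜ) :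
    x ∈ sectorRegion H t ↔ ∃ r : ℝ, x t = r ∧ (∃ y ∈ sectorRegion H t, y t ≤ r) ∧
      ∀ j (a : ℝ), x j = a → ∃ y ∈ sectorRegion H t, y t ≤ ((r - a : ℝ) : WithBot ℝ) + y j := by
  constructor
  · intro hx
    obtain ⟨r, hr⟩ := WithBot.ne_bot_iff_exists.1 hx.1
    refine ⟨r, hr.symm, ⟨x, hx, hr.ge⟩, fun j a ha => ⟨x, hx, ?_⟩⟩
    rw [← hr, ha, ← WithBot.coe_add, sub_add_cancel]
  · rintro ⟨r, hr, ⟨y₀, hy₀, hy₀t⟩, h⟩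
    let Q : Option (Fin n) → (Fin n → WithBot ℝ) → Prop
      | none, y => y t ≤ x t
      | some j, y => x j + y t ≤ y j + x t
    have hdir : DirectedOn (fun y z => ∀ i, Q i y → Q i z) (sectorRegion H t) :=
      (sectorRegion_directedOn h2).mono fun y z hyz i => match i with
        | none => (apply_le_of_mem_sector hyz).trans
        | some _ => add_le_add_of_mem_sector hyz
    obtain ⟨y, hy, hxy⟩ := exists_mem_forall_of_directedOn ⟨y₀, hy₀⟩ hdir fun i => match i with
      | none => ⟨y₀, hy₀, show y₀ t ≤ x t from hr ▸ hy₀t⟩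
      | some j => by
        cases hxj : x j using WithBot.recBotCoe with
        | bot => exact ⟨y₀, hy₀, by simp [Q, hxj]⟩
        | coe a =>
          obtain ⟨y, hy, hyj⟩ := h j a hxj
          refine ⟨y, hy, ?_⟩
          show x j + y t ≤ y j + x t
          rw [hxj, hr, coe_add_le_add_coe_iff]
          exact hyj
    exact mem_sectorRegion_of_mem_sector hy
      ((mem_sector_iff hy.1).2 ⟨hxy none, fun j => hxy (some j)⟩)

theorem isMixedHalfspace_compl_boxRegion (h2 : TropConvex Hᶜ) :
    IsMixedHalfspace (boxRegion H)ᶜ := by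
  obtain ⟨γ₀, hγ₀⟩ := exists_gle_fin_iff_notMem (U := {_r | (boxRegion H).Nonempty})
    fun _ _ _ h => h
  choose γ hγ using fun j => exists_gle_fin_iff_notMem
    (U := {d : ℝ | ∃ y ∈ boxRegion H, ((-d : ℝ) : WithBot ℝ) ≤ y j})
    fun d d' hdd' ⟨y, hy, hyj⟩ => ⟨y, hy, (WithBot.coe_le_coe.2 (neg_le_neg hdd')).trans hyj⟩
  refine ⟨0, fun _ => ⊥, γ₀, γ, ?_⟩
  ext x
  have hlhs : (0 : WithBot ℝ) ⊔ Finset.univ.sup (fun i => ⊥ + x i) = ((0 : ℝ) : WithBot ℝ) := by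
    simp
  rw [Set.mem_compl_iff, mem_boxRegion_iff h2, Set.mem_ofPred_eq, add_toGerm_gsum, hlhs,
    gle_toGerm_add_gsum_iff]
  simp only [hγ₀, hγ, Set.mem_ofPred_eq, WithBot.coe_inj, forall_eq', zero_sub, neg_neg,
    not_and_or, not_forall, exists_prop]

theorem isMixedHalfspace_compl_sectorRegion (h2 : TropConvex Hᶜ) (t : Fin n) :
    IsMixedHalfspace (sectorRegion H t)ᶜ := by
  obtain ⟨γ₀, hγ₀⟩ := exists_gle_fin_iff_notMem
    (U := {r : ℝ | ∃ y ∈ sectorRegion H t, y t ≤ r})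
    fun r r' hrr' ⟨y, hy, hyt⟩ => ⟨y, hy, hyt.trans (WithBot.coe_le_coe.2 hrr')⟩
  choose γ hγ using fun j => exists_gle_fin_iff_notMem
    (U := {d : ℝ | ∃ y ∈ sectorRegion H t, y t ≤ (d : WithBot ℝ) + y j})
    fun d d' hdd' ⟨y, hy, hyj⟩ =>
      ⟨y, hy, hyj.trans (add_le_add_left (WithBot.coe_le_coe.2 hdd') _)⟩
  refine ⟨⊥, fun i => if i = t then 0 else ⊥, γ₀, γ, ?_⟩
  have hlhs : ∀ x : Fin n → WithBot ℝ,
      ⊥ ⊔ Finset.univ.sup (fun i => (if i = t then 0 else ⊥) + x i) = x t := fun x =>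
    le_antisymm (sup_le bot_le (Finset.sup_le fun i _ => by split_ifs with h <;> simp [h]))
      (le_sup_of_le_right (Finset.le_sup_of_le (Finset.mem_univ t) (by simp)))
  ext x
  rw [Set.mem_compl_iff, mem_sectorRegion_iff h2, Set.mem_ofPred_eq, add_toGerm_gsum, hlhs,
    gle_toGerm_add_gsum_iff]
  simp only [hγ₀, hγ, Set.mem_ofPred_eq, not_exists, not_and, not_forall, exists_prop]
  refine forall₂_congr fun r _ => ?_
  rw [imp_iff_not_or]
  simp only [not_exists, not_and]

end Regions

theorem statement_13 (n : ℕ) (H : Set (Fin n → WithBot ℝ))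
    (h1 : TropConvex H) (h2 : TropConvex Hᶜ) :
    IsMixedPoly H := by
  have hH : H = ⋂ k : Option (Fin n), (k.elim (boxRegion H) (sectorRegion H))ᶜ := by
    rw [Set.iInter_option, Option.elim_none, ← Set.compl_iUnion, ← Set.compl_union]
    simp only [Option.elim_some]
    rw [← compl_eq_boxRegion_union_sectorRegion h1, compl_compl]
  rw [hH]
  exact isMixedPoly_iInter fun
    | none => isMixedHalfspace_compl_boxRegion h2
    | some t => isMixedHalfspace_compl_sectorRegion h2 t
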